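/- Let q = p^n ≡ 3 (mod 4), q ≥ 7, and u ∈ F_q with χ(u+1) ≠ χ(u-1), u ∉ {0, 1, -1} (in particular u+1 and u-1 nonzero). Then for every a ∈ F_q*, there is no x ∈ F_q \ {0, -a} satisfying f_u(x+a) - f_u(x) = 0, where f_u(x) = u·x^{(q-1)/2-1} + x^{q-2}. -/

import Mathlib

/-!
For `x ≠ 0` we have `x^((q-1)/2) = χ(x)` and `x^(q-2) = x⁻¹`, so `f_u(x) = (u χ(x) + 1)/x`, and it
suffices to show that this map is injective on `Fˣ`. If `f_u(x) = f_u(y)` with `x ≠ y` and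
`χ(x) = χ(y) = s`, then `u s = -1`, i.e. `u = ±1`. If `χ(y) = -χ(x) = -s`, the equation reads
`u s (x + y) = x - y`; squaring gives `(2u)² x y = (1 - u²)(x - y)²`. The left side has character
`χ((2u)²) χ(x) χ(y) ∈ {0, -1}`, while `χ(1 - u²) = χ(-1) χ(u+1) χ(u-1) = (-1)(-1) = 1` because
`q ≡ 3 (mod 4)` and `χ(u+1) ≠ χ(u-1)`.
-/

open Finset
open scoped Classical

/-- The quadratic character of a finite field, valued in ℤ. -/
noncomputable def qchar {F : Type*} [Field F] (x : F) : ℤ :=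
  if x = 0 then 0 else if IsSquare x then 1 else -1

section

variable {F : Type*} [Field F] [Fintype F]

theorem qchar_eq_quadraticChar (x : F) : qchar x = quadraticChar F x := by
  simp only [qchar, quadraticChar_apply, quadraticCharFun]
  congr

theorem pow_card_sub_two_eq_inv {x : F} (hx : x ≠ 0) : x ^ (Fintype.card F - 2) = x⁻¹ := by
  rw [show Fintype.card F - 2 = Fintype.card F - 1 - 1 by omega,
    pow_sub₀ x hx (by have := Fintype.one_lt_card (α := F); omega),
    FiniteField.pow_card_sub_one_eq_one x hx, pow_one, one_mul]

theorem pow_card_sub_one_div_two_sub_one (hF : ringChar F ≠ 2) {x : F} (hx : x ≠ 0) :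
    x ^ ((Fintype.card F - 1) / 2 - 1) = quadraticChar F x * x⁻¹ := by
  have hodd := FiniteField.odd_card_of_char_ne_two hF
  have hcard := Fintype.one_lt_card (α := F)
  rw [pow_sub₀ x hx (by omega), pow_one, quadraticChar_eq_pow_of_char_ne_two' hF,
    show (Fintype.card F - 1) / 2 = Fintype.card F / 2 by omega]

theorem quadraticChar_sq_ne_neg_one (w : F) : quadraticChar F (w ^ 2) ≠ -1 := by
  rcases eq_or_ne w 0 with rfl | hw
  · simp
  · simp [quadraticChar_sq_one' hw]

theorem quadraticChar_one_sub_sq (hneg : quadraticChar F (-1) = -1) {u : F}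
    (hu : quadraticChar F (u + 1) ≠ quadraticChar F (u - 1)) (hu1 : u ≠ 1) (hum1 : u ≠ -1) :
    quadraticChar F (1 - u ^ 2) = 1 := by
  rw [show 1 - u ^ 2 = -1 * ((u + 1) * (u - 1)) by ring, map_mul, map_mul, hneg]
  rcases quadraticChar_dichotomy (F := F) (a := u + 1) (fun h => hum1 (eq_neg_of_add_eq_zero_left h)) with h | h <;>
  rcases quadraticChar_dichotomy (F := F) (a := u - 1) (sub_ne_zero.mpr hu1) with h' | h' <;>
  simp_all

theorem injOn_mul_quadraticChar_add_one_div (hneg : quadraticChar F (-1) = -1) {u : F}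
    (hu : quadraticChar F (u + 1) ≠ quadraticChar F (u - 1)) (hu1 : u ≠ 1) (hum1 : u ≠ -1) :
    Set.InjOn (fun x : F => (u * quadraticChar F x + 1) / x) {0}ᶜ := by
  intro x hx y hy hxy
  simp only [Set.mem_compl_iff, Set.mem_singleton_iff] at hx hy
  simp only at hxy
  by_contra hne
  obtain ⟨s, hs, hsx⟩ : ∃ s : ℤ, (s = 1 ∨ s = -1) ∧ quadraticChar F x = s :=
    ⟨_, quadraticChar_dichotomy hx, rfl⟩
  have hsy : quadraticChar F y = s ∨ quadraticChar F y = -s := by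
    rcases quadraticChar_dichotomy hy with h | h <;> rcases hs with rfl | rfl <;> simp [h]
  rw [hsx] at hxy
  rcases hsy with hsy | hsy
  · rw [hsy, div_eq_div_iff hx hy] at hxy
    have hus : u * s + 1 = 0 := by
      have : (u * s + 1) * (y - x) = 0 := by linear_combination hxy
      exact (mul_eq_zero.mp this).resolve_right (sub_ne_zero.mpr (Ne.symm hne))
    rcases hs with rfl | rfl
    · push_cast at hus
      exact hum1 (by linear_combination hus)
    · push_cast at hus
      exact hu1 (by linear_combination -hus)
  · rw [hsy, div_eq_div_iff hx hy] at hxy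
    have hs2 : (s : F) ^ 2 = 1 := by rcases hs with rfl | rfl <;> norm_num
    have key : (2 * u) ^ 2 * (x * y) = (1 - u ^ 2) * (x - y) ^ 2 := by
      push_cast at hxy
      linear_combination (u * s * (x + y) + (x - y)) * hxy - u ^ 2 * (x + y) ^ 2 * hs2
    have := congrArg (quadraticChar F) key
    rw [map_mul, map_mul, map_mul, quadraticChar_one_sub_sq hneg hu hu1 hum1,
      quadraticChar_sq_one' (sub_ne_zero.mpr hne), hsx, hsy] at this
    apply quadraticChar_sq_ne_neg_one (2 * u)
    rcases hs with rfl | rfl <;> linarith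

end

theorem stmt_11_general {F : Type*} [Field F] [Fintype F] (p n : ℕ)
    (hcard : Fintype.card F = p ^ n)
    (hq4 : p ^ n % 4 = 3) (u : F)
    (hu : qchar (u + 1) ≠ qchar (u - 1)) (hu1 : u ≠ 1) (hum1 : u ≠ -1)
    (fu : F → F) (hfu : ∀ x, fu x = u * x ^ ((Fintype.card F - 1) / 2 - 1) + x ^ (Fintype.card F - 2))
    (a : F) (ha : a ≠ 0) :
    ((Finset.univ \ {0, -a} : Finset F).filter fun x => fu (x + a) - fu x = 0).card = 0 := by
  have hq : Fintype.card F % 4 = 3 := hcard ▸ hq4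
  have hF : ringChar F ≠ 2 := fun h => by
    have := FiniteField.even_card_iff_char_two.mp h
    omega
  have hneg : quadraticChar F (-1) = -1 := by
    rw [quadraticChar_neg_one hF, ZMod.χ₄_nat_three_mod_four hq]
  have hfu_eq : ∀ x ≠ 0, fu x = (u * quadraticChar F x + 1) / x := fun x hx => by
    rw [hfu, pow_card_sub_one_div_two_sub_one hF hx, pow_card_sub_two_eq_inv hx]
    ring
  simp only [qchar_eq_quadraticChar] at hu
  rw [card_eq_zero, filter_eq_empty_iff]
  intro x hx hfx
  simp only [mem_sdiff, mem_univ, mem_insert, mem_singleton, true_and, not_or] at hx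
  obtain ⟨hx0, hxa⟩ := hx
  have hxa0 : x + a ≠ 0 := fun h => hxa (by linear_combination h)
  have hinj := injOn_mul_quadraticChar_add_one_div hneg hu hu1 hum1 hxa0 hx0
    ((hfu_eq _ hxa0).symm.trans ((sub_eq_zero.mp hfx).trans (hfu_eq _ hx0)))
  exact ha (by linear_combination hinj)

theorem stmt_11 {F : Type*} [Field F] [Fintype F] (p n : ℕ)
    (hp : p.Prime) (hn : 0 < n) (hcard : Fintype.card F = p ^ n)
    (hq4 : p ^ n % 4 = 3) (hq7 : 7 ≤ p ^ n) (u : F)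
    (hu : qchar (u + 1) ≠ qchar (u - 1)) (hu0 : u ≠ 0) (hu1 : u ≠ 1) (hum1 : u ≠ -1)
    (fu : F → F) (hfu : ∀ x, fu x = u * x ^ ((Fintype.card F - 1) / 2 - 1) + x ^ (Fintype.card F - 2))
    (a : F) (ha : a ≠ 0) :
    ((Finset.univ \ {0, -a} : Finset F).filter fun x => fu (x + a) - fu x = 0).card = 0 :=
  stmt_11_general p n hcard hq4 u hu hu1 hum1 fu hfu a ha
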